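/- arXiv:1608.03857 — 4 statements merged into one kernel-verified Lean document; each statement's English description precedes it below -/
import Mathlib

section
/- The function w ↦ w·exp(−Ein(w)) is strictly increasing on [0,∞) and converges to e^{−γ} as w → ∞, where Ein(w) = ∫₀^w (1−e^{−t})/t dt and γ is the Euler–Mascheroni constant. -/
open Real Filter

/-- The exponential integral `Ein w = ∫₀^w (1 - e^{-t})/t dt`. -/
noncomputable def Ein (w : ℝ) : ℝ := ∫ t in (0:ℝ)..w, (1 - Real.exp (-t)) / t

/-!
Since `Ein' w = (1 - e^{-w}) / w`, the function `F w = w e^{-Ein w}` has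
`F' w = e^{-w - Ein w} > 0`. For the limit, `Φ t = (1 - e^{-t}) log t - Ein t` is an antiderivative
of `log t · e^{-t}` with `Φ 0⁺ = 0`, and `log w - Ein w = Φ w + e^{-w} log w`. Hence
`log (F w) = log w - Ein w` tends to `∫₀^∞ log t · e^{-t} dt = Γ'(1) = -γ`.
-/

open MeasureTheory intervalIntegral Set Topology

lemma norm_one_sub_exp_neg_div_le_one {t : ℝ} (ht : 0 ≤ t) : ‖(1 - exp (-t)) / t‖ ≤ 1 := by
  rcases ht.eq_or_lt with rfl | ht
  · simp
  have h₀ : 0 ≤ 1 - exp (-t) := sub_nonneg.2 (exp_le_one_iff.2 (by linarith))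
  rw [Real.norm_eq_abs, abs_of_nonneg (div_nonneg h₀ ht.le), div_le_one ht]
  linarith [one_sub_le_exp_neg t]

lemma measurable_one_sub_exp_neg_div : Measurable fun t : ℝ => (1 - exp (-t)) / t := by
  fun_prop

lemma intervalIntegrable_one_sub_exp_neg_div {b : ℝ} (hb : 0 ≤ b) :
    IntervalIntegrable (fun t => (1 - exp (-t)) / t) volume 0 b := by
  refine (intervalIntegrable_const (c := (1:ℝ))).mono_fun'
    (measurable_one_sub_exp_neg_div.aestronglyMeasurable) ?_
  rw [uIoc_of_le hb]
  filter_upwards [ae_restrict_mem measurableSet_Ioc] with t ht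
  exact norm_one_sub_exp_neg_div_le_one ht.1.le

lemma abs_Ein_le {w : ℝ} (hw : 0 ≤ w) : |Ein w| ≤ w := by
  simpa [Ein, abs_of_nonneg hw] using norm_integral_le_of_norm_le_const (a := 0) (b := w) (C := 1)
    fun t ht => norm_one_sub_exp_neg_div_le_one (uIoc_of_le hw ▸ ht).1.le

lemma hasDerivAt_Ein {w : ℝ} (hw : 0 < w) : HasDerivAt Ein ((1 - exp (-w)) / w) w :=
  integral_hasDerivAt_right (intervalIntegrable_one_sub_exp_neg_div hw.le)
    measurable_one_sub_exp_neg_div.stronglyMeasurable.stronglyMeasurableAtFilter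
    ((by fun_prop : Continuous fun t : ℝ => 1 - exp (-t)).continuousAt.div continuousAt_id hw.ne')

lemma continuousOn_Ein : ContinuousOn Ein (Ici 0) := by
  intro w hw
  rcases (mem_Ici.1 hw).eq_or_lt with rfl | hw
  · have : Tendsto Ein (𝓝[Ici 0] 0) (𝓝 0) :=
      squeeze_zero_norm' (eventually_nhdsWithin_of_forall fun t ht => abs_Ein_le ht)
        (tendsto_id.mono_left nhdsWithin_le_nhds)
    simpa [ContinuousWithinAt, Ein] using this
  · exact (hasDerivAt_Ein hw).continuousAt.continuousWithinAt

lemma hasDerivAt_mul_exp_neg_Ein {w : ℝ} (hw : 0 < w) :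
    HasDerivAt (fun w => w * exp (-Ein w)) (exp (-w) * exp (-Ein w)) w := by
  refine ((hasDerivAt_id' w).fun_mul (hasDerivAt_Ein hw).fun_neg.exp).congr_deriv ?_
  field_simp
  ring

lemma strictMonoOn_mul_exp_neg_Ein : StrictMonoOn (fun w => w * exp (-Ein w)) (Ici 0) := by
  refine strictMonoOn_of_deriv_pos (convex_Ici 0) (continuousOn_id.mul continuousOn_Ein.neg.rexp)
    fun w hw => ?_
  rw [interior_Ici] at hw
  rw [(hasDerivAt_mul_exp_neg_Ein hw).deriv]
  positivity

lemma abs_log_le_two_mul_rpow {t : ℝ} (ht : 0 < t) :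
    |log t| ≤ 2 * t ^ (1 / 2 : ℝ) + 2 * t ^ (-(1 / 2) : ℝ) := by
  have h₁ := log_le_rpow_div ht.le (one_half_pos : (0:ℝ) < 1 / 2)
  have h₂ := log_le_rpow_div (inv_pos.2 ht).le (one_half_pos : (0:ℝ) < 1 / 2)
  rw [log_inv, inv_rpow ht.le, ← rpow_neg ht.le] at h₂
  have := rpow_pos_of_pos ht (1 / 2 : ℝ)
  have := rpow_pos_of_pos ht (-(1 / 2) : ℝ)
  rw [abs_le]
  constructor <;> linarith

lemma integrableOn_log_mul_exp_neg : IntegrableOn (fun t => log t * exp (-t)) (Ioi 0) := by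
  have hdom := ((GammaIntegral_convergent (s := 3 / 2) (by norm_num)).const_mul 2).add
    ((GammaIntegral_convergent (s := 1 / 2) (by norm_num)).const_mul 2)
  refine hdom.mono' (by fun_prop) ?_
  filter_upwards [ae_restrict_mem measurableSet_Ioi] with t ht
  rw [norm_mul, Real.norm_eq_abs, Real.norm_eq_abs, abs_of_pos (exp_pos _), Pi.add_apply,
    show (3 / 2 : ℝ) - 1 = 1 / 2 by norm_num, show (1 / 2 : ℝ) - 1 = -(1 / 2) by norm_num]
  nlinarith [abs_log_le_two_mul_rpow ht, exp_pos (-t)]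

lemma integral_log_mul_exp_neg : ∫ t in Ioi 0, log t * exp (-t) = -eulerMascheroniConstant := by
  have hΓ : Complex.Gamma =ᶠ[𝓝 1] Complex.GammaIntegral := by
    filter_upwards [(isOpen_lt continuous_const Complex.continuous_re).mem_nhds
      (by norm_num : (0:ℝ) < (1:ℂ).re)] with s hs using Complex.Gamma_eq_integral hs
  have := ((Complex.hasDerivAt_GammaIntegral (s := 1) (by norm_num)).congr_of_eventuallyEq
    hΓ).unique Complex.hasDerivAt_Gamma_one
  simp only [sub_self, Complex.cpow_zero, one_mul, ← Complex.ofReal_mul,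
    ← Complex.ofReal_neg] at this
  exact_mod_cast this

lemma continuousOn_one_sub_exp_neg_mul_log :
    ContinuousOn (fun t => (1 - exp (-t)) * log t) (Ici 0) := by
  intro t ht
  rcases (mem_Ici.1 ht).eq_or_lt with rfl | ht
  · rw [← continuousWithinAt_Ioi_iff_Ici, ContinuousWithinAt, log_zero, mul_zero]
    have hlog : Tendsto (fun t => ‖log t * t‖) (𝓝[>] 0) (𝓝 0) := by
      simpa using (tendsto_log_mul_rpow_nhdsGT_zero one_pos).norm
    refine squeeze_zero_norm' (eventually_nhdsWithin_of_forall fun t (ht : 0 < t) => ?_) hlog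
    calc ‖(1 - exp (-t)) * log t‖ = ‖(1 - exp (-t)) / t‖ * ‖log t * t‖ := by
          rw [← norm_mul]; field_simp
      _ ≤ ‖log t * t‖ := mul_le_of_le_one_left (norm_nonneg _)
          (norm_one_sub_exp_neg_div_le_one ht.le)
  · exact ((by fun_prop : Continuous fun t : ℝ => 1 - exp (-t)).continuousAt.mul
      (continuousAt_log ht.ne')).continuousWithinAt

lemma hasDerivAt_one_sub_exp_neg_mul_log_sub_Ein {t : ℝ} (ht : 0 < t) :
    HasDerivAt (fun t => (1 - exp (-t)) * log t - Ein t) (log t * exp (-t)) t := by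
  refine ((((hasDerivAt_neg' t).exp.const_sub 1).fun_mul (hasDerivAt_log ht.ne')).fun_sub
    (hasDerivAt_Ein ht)).congr_deriv ?_
  field_simp
  ring

lemma integral_log_mul_exp_neg_eq {w : ℝ} (hw : 0 ≤ w) :
    ∫ t in 0..w, log t * exp (-t) = (1 - exp (-w)) * log w - Ein w := by
  rw [integral_eq_sub_of_hasDerivAt_of_le hw
    ((continuousOn_one_sub_exp_neg_mul_log.sub continuousOn_Ein).mono Icc_subset_Ici_self)
    (fun t ht => hasDerivAt_one_sub_exp_neg_mul_log_sub_Ein ht.1)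
    ((intervalIntegrable_iff_integrableOn_Ioc_of_le hw).2
      (integrableOn_log_mul_exp_neg.mono_set Ioc_subset_Ioi_self))]
  simp [Ein]

lemma tendsto_log_sub_Ein_atTop :
    Tendsto (fun w => log w - Ein w) atTop (𝓝 (-eulerMascheroniConstant)) := by
  have hint : Tendsto (fun w => ∫ t in 0..w, log t * exp (-t)) atTop
      (𝓝 (-eulerMascheroniConstant)) :=
    integral_log_mul_exp_neg ▸
      intervalIntegral_tendsto_integral_Ioi 0 integrableOn_log_mul_exp_neg tendsto_id
  have hdecay : Tendsto (fun w => log w * exp (-w)) atTop (𝓝 0) := by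
    refine squeeze_zero_norm' ?_ (by simpa using tendsto_pow_mul_exp_neg_atTop_nhds_zero 1)
    filter_upwards [eventually_ge_atTop 1] with w hw
    rw [norm_mul, Real.norm_eq_abs, Real.norm_eq_abs, abs_of_nonneg (log_nonneg hw),
      abs_of_pos (exp_pos _)]
    exact mul_le_mul_of_nonneg_right (log_le_self (by linarith)) (exp_pos _).le
  have hsum := hint.add hdecay
  rw [add_zero] at hsum
  refine hsum.congr' ?_
  filter_upwards [eventually_ge_atTop 0] with w hw
  rw [integral_log_mul_exp_neg_eq hw]
  ring

/-- The function `w ↦ w·exp(−Ein(w))` is strictly increasing on `[0,∞)` and converges to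
`e^{−γ}` as `w → ∞`, where `γ` is the Euler–Mascheroni constant. -/
theorem stmt0 :
    StrictMonoOn (fun w : ℝ => w * Real.exp (-(Ein w))) (Set.Ici (0:ℝ)) ∧
    Tendsto (fun w : ℝ => w * Real.exp (-(Ein w))) atTop
      (nhds (Real.exp (-Real.eulerMascheroniConstant))) := by
  refine ⟨strictMonoOn_mul_exp_neg_Ein, ?_⟩
  refine ((continuous_exp.tendsto _).comp tendsto_log_sub_Ein_atTop).congr' ?_
  filter_upwards [eventually_gt_atTop 0] with w hw
  rw [Function.comp_apply, exp_sub, exp_log hw, div_eq_mul_inv, ← exp_neg]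
end

section
/- The inverse function α of w ↦ w·e^{−Ein(w)} satisfies α'(η) = exp(α(η) + Ein(α(η))) for η ∈ (0, e^{−γ}), and α is a convex, strictly increasing function on [0, e^{−γ}) with α(0) = 0 and α(η) → ∞ as η → e^{−γ}. -/
open Real Filter

/-! `α` inverts the strictly increasing map `w ↦ w e^{-Ein w}`, whose derivative is
`e^{-(w + Ein w)} > 0`. Hence `α` is continuous, the inverse function theorem gives
`α' = e^{α + Ein α}`, and this derivative increases with `η` because `α` and `Ein` do, which is
convexity. For `α → ∞` one needs `w e^{-Ein w} < e^{-γ}`, i.e. `γ ≤ Ein w - log w`: the right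
side decreases in `w` (its derivative is `-e^{-w}/w`), and at `w = n` it dominates
`H_n - log n - 1/n → γ`, since `H_n = ∫₀ⁿ (1 - (1 - t/n)ⁿ)/t dt` and
`e^{-t} - (1 - t/n)ⁿ ≤ t² e^{-t}/n` on `[0, n]`. -/

open Set MeasureTheory Topology

noncomputable def einDeriv : ℝ → ℝ := dslope (fun t => 1 - exp (-t)) 0

lemma einDeriv_of_ne_zero {t : ℝ} (ht : t ≠ 0) : einDeriv t = (1 - exp (-t)) / t := by
  simp [einDeriv, dslope_of_ne _ ht, slope, div_eq_inv_mul]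

lemma mul_einDeriv (t : ℝ) : t * einDeriv t = 1 - exp (-t) := by
  simpa [einDeriv] using sub_smul_dslope (fun t : ℝ => 1 - exp (-t)) 0 t

lemma continuous_einDeriv : Continuous einDeriv :=
  continuousOn_univ.1 <| (continuousOn_dslope univ_mem).2 ⟨by fun_prop, by fun_prop⟩

lemma einDeriv_nonneg (t : ℝ) : 0 ≤ einDeriv t := by
  rcases lt_trichotomy t 0 with ht | rfl | ht
  · rw [einDeriv_of_ne_zero ht.ne]
    exact div_nonneg_of_nonpos (by simpa using one_le_exp (neg_nonneg.2 ht.le)) ht.le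
  · simp [einDeriv, (hasDerivAt_neg (0:ℝ)).exp.deriv]
  · rw [einDeriv_of_ne_zero ht.ne']
    exact div_nonneg (by simpa using exp_le_one_iff.2 (neg_nonpos.2 ht.le)) ht.le

lemma einDeriv_le_inv {t : ℝ} (ht : 0 < t) : einDeriv t ≤ t⁻¹ := by
  rw [einDeriv_of_ne_zero ht.ne', div_eq_mul_inv]
  exact mul_le_of_le_one_left (inv_nonneg.2 ht.le) (by linarith [exp_pos (-t)])

lemma Ein_eq_integral_einDeriv (w : ℝ) : Ein w = ∫ t in (0:ℝ)..w, einDeriv t := by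
  refine intervalIntegral.integral_congr_ae ?_
  filter_upwards [measure_eq_zero_iff_ae_notMem.1 (measure_singleton (0:ℝ))] with t ht _
  exact (einDeriv_of_ne_zero ht).symm

lemma hasDerivAt_Ein_s4 (w : ℝ) : HasDerivAt Ein (einDeriv w) w := by
  rw [funext Ein_eq_integral_einDeriv]
  exact (continuous_einDeriv.integral_hasStrictDerivAt 0 w).hasDerivAt

lemma monotone_Ein : Monotone Ein :=
  monotone_of_hasDerivAt_nonneg hasDerivAt_Ein_s4 einDeriv_nonneg

noncomputable def mulExpNegEin (w : ℝ) : ℝ := w * exp (-Ein w)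

lemma mulExpNegEin_zero : mulExpNegEin 0 = 0 := zero_mul _

lemma hasDerivAt_mulExpNegEin (w : ℝ) :
    HasDerivAt mulExpNegEin (exp (-(w + Ein w))) w := by
  refine ((hasDerivAt_id' w).mul (hasDerivAt_Ein_s4 w).neg.exp).congr_deriv ?_
  rw [Pi.neg_apply, neg_add, exp_add]
  linear_combination -exp (-Ein w) * mul_einDeriv w

lemma strictMono_mulExpNegEin : StrictMono mulExpNegEin :=
  strictMono_of_hasDerivAt_pos hasDerivAt_mulExpNegEin fun _ => exp_pos _

lemma exp_neg_mul_one_sub_le_one_sub_div_pow {n : ℕ} {t : ℝ} (ht : 0 ≤ t) (htn : t ≤ n) :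
    exp (-t) * (1 - t ^ 2 / n) ≤ (1 - t / n) ^ n := by
  rcases eq_or_ne n 0 with rfl | hn
  · obtain rfl : t = 0 := le_antisymm (by simpa using htn) ht
    simp
  set c := t / n with hc
  have hn' : (0 : ℝ) < n := Nat.cast_pos.2 (Nat.pos_of_ne_zero hn)
  have hc0 : 0 ≤ c := div_nonneg ht hn'.le
  have hc1 : c ≤ 1 := (div_le_one hn').2 htn
  have hsq : 1 - c ^ 2 ≤ (1 - c) * exp c := by nlinarith [add_one_le_exp c]
  have hbernoulli : 1 - n * c ^ 2 ≤ (1 - c ^ 2) ^ n := by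
    simpa [sub_eq_add_neg] using one_add_mul_le_pow (a := -c ^ 2) (by nlinarith) n
  calc exp (-t) * (1 - t ^ 2 / n) = exp (-t) * (1 - n * c ^ 2) := by
        rw [hc]; field_simp
    _ ≤ exp (-t) * ((1 - c) * exp c) ^ n := by
        gcongr
        exact hbernoulli.trans (pow_le_pow_left₀ (by nlinarith) hsq n)
    _ = (1 - t / n) ^ n := by
        rw [mul_pow, ← exp_nat_mul, hc, mul_div_cancel₀ t hn'.ne', mul_left_comm, ← exp_add]
        simp

noncomputable def harmonicKernel (n : ℕ) (t : ℝ) : ℝ :=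
  (∑ j ∈ Finset.range n, (1 - t / n) ^ j) / n

lemma continuous_harmonicKernel (n : ℕ) : Continuous (harmonicKernel n) := by
  unfold harmonicKernel
  fun_prop

lemma integral_harmonicKernel (n : ℕ) : ∫ t in (0:ℝ)..n, harmonicKernel n t = harmonic n := by
  rcases eq_or_ne n 0 with rfl | hn
  · simp
  have hn' : (n : ℝ) ≠ 0 := Nat.cast_ne_zero.2 hn
  have hpow (j : ℕ) : ∫ t in (0:ℝ)..n, (1 - t / n) ^ j = n / (j + 1) := by
    have := intervalIntegral.integral_comp_div (a := 0) (b := n) (fun u : ℝ => (1 - u) ^ j) hn'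
    simp only [this, zero_div, div_self hn',
      intervalIntegral.integral_comp_sub_left (fun u => u ^ j)]
    simp [div_eq_mul_inv]
  simp only [harmonicKernel, intervalIntegral.integral_div]
  rw [intervalIntegral.integral_finsetSum fun j _ =>
    (by fun_prop : Continuous _).intervalIntegrable _ _]
  simp [hpow, harmonic, Finset.sum_div, div_div_cancel_left' hn']

lemma mul_harmonicKernel (n : ℕ) (t : ℝ) : t * harmonicKernel n t = 1 - (1 - t / n) ^ n := by
  rw [← mul_neg_geom_sum, harmonicKernel]
  ring

lemma harmonicKernel_le {n : ℕ} {t : ℝ} (ht : 0 < t) (htn : t ≤ n) :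
    harmonicKernel n t ≤ einDeriv t + t * exp (-t) / n := by
  refine le_of_mul_le_mul_left ?_ ht
  rw [mul_add, mul_harmonicKernel, mul_einDeriv]
  linear_combination exp_neg_mul_one_sub_le_one_sub_div_pow ht.le htn

lemma harmonic_le_Ein_add_inv (n : ℕ) : (harmonic n : ℝ) ≤ Ein n + (n : ℝ)⁻¹ := by
  have hexp : ∫ t in (0:ℝ)..n, t * exp (-t) ≤ 1 := by
    simpa using intervalIntegral_pow_mul_exp_neg_le (k := 1) (M := n) (Nat.cast_nonneg n) one_pos
  calc (harmonic n : ℝ)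
      = ∫ t in (0:ℝ)..n, harmonicKernel n t := (integral_harmonicKernel n).symm
    _ ≤ ∫ t in (0:ℝ)..n, (einDeriv t + t * exp (-t) / n) :=
      intervalIntegral.integral_mono_on_of_le_Ioo (Nat.cast_nonneg n)
        ((continuous_harmonicKernel n).intervalIntegrable _ _)
        ((continuous_einDeriv.add (by fun_prop)).intervalIntegrable _ _)
        fun t ht => harmonicKernel_le ht.1 ht.2.le
    _ = Ein n + (∫ t in (0:ℝ)..n, t * exp (-t)) / n := by
      rw [intervalIntegral.integral_add (continuous_einDeriv.intervalIntegrable _ _)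
        ((by fun_prop : Continuous _).intervalIntegrable _ _),
        intervalIntegral.integral_div, Ein_eq_integral_einDeriv]
    _ ≤ Ein n + (n : ℝ)⁻¹ := by
      rw [div_eq_mul_inv]
      exact add_le_add_right (mul_le_of_le_one_left (inv_nonneg.2 n.cast_nonneg) hexp) _

lemma antitoneOn_Ein_sub_log : AntitoneOn (fun w => Ein w - log w) (Ioi 0) := by
  refine antitoneOn_of_hasDerivWithinAt_nonpos (convex_Ioi 0) (f' := fun w => einDeriv w - w⁻¹)
    ?_ (fun w hw => ?_) fun w hw => ?_
  · exact fun w hw => ((hasDerivAt_Ein_s4 w).continuousAt.sub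
      (continuousAt_log (ne_of_gt hw))).continuousWithinAt
  · rw [interior_Ioi] at hw
    exact ((hasDerivAt_Ein_s4 w).sub (hasDerivAt_log (ne_of_gt hw))).hasDerivWithinAt
  · rw [interior_Ioi] at hw
    exact sub_nonpos.2 (einDeriv_le_inv hw)

lemma eulerMascheroniConstant_le_Ein_sub_log {w : ℝ} (hw : 0 < w) :
    eulerMascheroniConstant ≤ Ein w - log w := by
  have hlim : Tendsto (fun n : ℕ => (harmonic n : ℝ) - log n - (n : ℝ)⁻¹) atTop
      (𝓝 eulerMascheroniConstant) := by
    simpa using tendsto_harmonic_sub_log.sub tendsto_inv_atTop_nhds_zero_nat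
  refine le_of_tendsto hlim ?_
  filter_upwards [eventually_ge_atTop ⌈w⌉₊] with n hn
  have hwn : w ≤ n := Nat.ceil_le.1 hn
  calc (harmonic n : ℝ) - log n - (n : ℝ)⁻¹ ≤ Ein n - log n := by
        linarith [harmonic_le_Ein_add_inv n]
    _ ≤ Ein w - log w := antitoneOn_Ein_sub_log hw (hw.trans_le hwn) hwn

lemma mulExpNegEin_le (w : ℝ) : mulExpNegEin w ≤ exp (-eulerMascheroniConstant) := by
  rcases le_or_gt w 0 with hw | hw
  · exact (mul_nonpos_of_nonpos_of_nonneg hw (exp_pos _).le).trans (exp_pos _).le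
  · rw [mulExpNegEin, show w * exp (-Ein w) = exp (log w + -Ein w) by rw [exp_add, exp_log hw],
      exp_le_exp]
    linarith [eulerMascheroniConstant_le_Ein_sub_log hw]

lemma mulExpNegEin_lt (w : ℝ) : mulExpNegEin w < exp (-eulerMascheroniConstant) :=
  (strictMono_mulExpNegEin (lt_add_one w)).trans_le (mulExpNegEin_le _)

section RightInverse

variable {f α : ℝ → ℝ} {s : Set ℝ}

lemma StrictMono.strictMonoOn_of_rightInvOn (hf : StrictMono f) (h : RightInvOn α f s) :
    StrictMonoOn α s :=
  fun x hx y hy hxy => hf.lt_iff_lt.1 (by rwa [h hx, h hy])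

lemma StrictMono.continuousOn_of_rightInvOn (hf : StrictMono f) (h : RightInvOn α f s) :
    ContinuousOn α s := by
  intro y hy
  refine tendsto_order.2 ⟨fun b hb => ?_, fun b hb => ?_⟩
  · filter_upwards [nhdsWithin_le_nhds (eventually_gt_nhds (h hy ▸ hf hb)),
      self_mem_nhdsWithin] with z hz hzs
    exact hf.lt_iff_lt.1 (by rwa [h hzs])
  · filter_upwards [nhdsWithin_le_nhds (eventually_lt_nhds (h hy ▸ hf hb)),
      self_mem_nhdsWithin] with z hz hzs
    exact hf.lt_iff_lt.1 (by rwa [h hzs])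

lemma StrictMono.hasDerivAt_of_rightInvOn {y f' : ℝ} (hf : StrictMono f)
    (h : RightInvOn α f s) (hs : s ∈ 𝓝 y) (hf' : HasDerivAt f f' (α y)) (hf'0 : f' ≠ 0) :
    HasDerivAt α f'⁻¹ y :=
  hf'.of_local_left_inverse ((hf.continuousOn_of_rightInvOn h).continuousAt hs) hf'0
    (eventually_of_mem hs h)

lemma StrictMono.tendsto_atTop_of_rightInvOn {a : ℝ} (hf : StrictMono f)
    (h : RightInvOn α f s) (hs : s ∈ 𝓝[<] a) (hfa : ∀ w, f w < a) :
    Tendsto α (𝓝[<] a) atTop := by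
  refine Filter.tendsto_atTop.2 fun M => ?_
  filter_upwards [hs, Ioo_mem_nhdsLT (hfa M)] with y hys hy
  exact (hf.lt_iff_lt.1 (by rw [h hys]; exact hy.1)).le

end RightInverse

/-- The inverse function `α` of `w ↦ w·e^{−Ein(w)}` satisfies
`α'(η) = exp(α(η) + Ein(α(η)))` on `(0, e^{−γ})`, and `α` is convex and strictly increasing
on `[0, e^{−γ})`, with `α(0) = 0` and `α(η) → ∞` as `η → e^{−γ}` (from the left). -/
theorem stmt4 (α : ℝ → ℝ)
    (hα : ∀ η : ℝ, 0 ≤ η → η < Real.exp (-Real.eulerMascheroniConstant) →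
      0 ≤ α η ∧ α η * Real.exp (-(Ein (α η))) = η) :
    (∀ η : ℝ, 0 < η → η < Real.exp (-Real.eulerMascheroniConstant) →
        HasDerivAt α (Real.exp (α η + Ein (α η))) η) ∧
    ConvexOn ℝ (Set.Ico 0 (Real.exp (-Real.eulerMascheroniConstant))) α ∧
    StrictMonoOn α (Set.Ico 0 (Real.exp (-Real.eulerMascheroniConstant))) ∧
    α 0 = 0 ∧
    Tendsto α (nhdsWithin (Real.exp (-Real.eulerMascheroniConstant))
      (Set.Iio (Real.exp (-Real.eulerMascheroniConstant)))) atTop := by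
  set E := exp (-eulerMascheroniConstant)
  have hE : 0 < E := exp_pos _
  have hinv : RightInvOn α mulExpNegEin (Ico 0 E) := fun η hη => (hα η hη.1 hη.2).2
  have hmono := strictMono_mulExpNegEin.strictMonoOn_of_rightInvOn hinv
  have hderiv (η : ℝ) (hη : η ∈ Ioo 0 E) : HasDerivAt α (exp (α η + Ein (α η))) η := by
    simpa [← exp_neg] using strictMono_mulExpNegEin.hasDerivAt_of_rightInvOn hinv
      (Ico_mem_nhds hη.1 hη.2) (hasDerivAt_mulExpNegEin (α η)) (exp_pos _).ne'
  refine ⟨fun η hη0 hηE => hderiv η ⟨hη0, hηE⟩, ?_, hmono, ?_,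
    strictMono_mulExpNegEin.tendsto_atTop_of_rightInvOn hinv (Ico_mem_nhdsLT hE) mulExpNegEin_lt⟩
  · refine MonotoneOn.convexOn_of_deriv (convex_Ico 0 E)
      (strictMono_mulExpNegEin.continuousOn_of_rightInvOn hinv) ?_ ?_ <;> rw [interior_Ico]
    · exact fun η hη => (hderiv η hη).differentiableAt.differentiableWithinAt
    · intro x hx y hy hxy
      have hαxy := hmono.monotoneOn (Ioo_subset_Ico_self hx) (Ioo_subset_Ico_self hy) hxy
      rw [(hderiv x hx).deriv, (hderiv y hy).deriv]
      exact exp_le_exp.2 (add_le_add hαxy (monotone_Ein hαxy))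
  · exact strictMono_mulExpNegEin.injective (by rw [hinv ⟨le_rfl, hE⟩, mulExpNegEin_zero])
end

section
/- Let X₁,…,Xₙ be independent Bernoulli random variables with P(Xᵢ = 1) = pᵢ, and let X = X₁ + ⋯ + Xₙ and μ = p₁ + ⋯ + pₙ. Then Σ_{k≥0} |P(X = k) − e^{−μ}μᵏ/k!| ≤ 2·Σᵢ pᵢ². -/
/-!
The mass function of a sum of independent `ℕ`-valued variables is the convolution of their mass
functions, and Poisson mass functions convolve to Poisson ones. So the law of `∑ Xᵢ` and
`Poisson(∑ pᵢ)` are the convolutions of the `n` pairs `Bernoulli(pᵢ)`, `Poisson(pᵢ)`. Since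
`a ∗ b - c ∗ d = (a - c) ∗ b + c ∗ (b - d)`, the `ℓ¹` distance between convolutions of
probability mass functions is at most the sum of the distances of the factors, and a direct
computation gives `‖Bernoulli(p) - Poisson(p)‖₁ = 2p(1 - e^{-p}) ≤ 2p²`.
-/

open MeasureTheory ProbabilityTheory Finset
open scoped Nat

namespace LeCam

def conv (a b : ℕ → ℝ) (k : ℕ) : ℝ := ∑ x ∈ antidiagonal k, a x.1 * b x.2

lemma conv_sub_conv (a b c d : ℕ → ℝ) (k : ℕ) :
    conv a b k - conv c d k = conv (a - c) b k + conv c (b - d) k := by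
  simp only [conv, ← sum_sub_distrib, ← sum_add_distrib, Pi.sub_apply]
  exact sum_congr rfl fun _ _ => by ring

lemma abs_conv_le (f g : ℕ → ℝ) (k : ℕ) :
    |conv f g k| ≤ conv (fun m => |f m|) (fun m => |g m|) k :=
  (abs_sum_le_sum_abs _ _).trans_eq (sum_congr rfl fun _ _ => abs_mul _ _)

lemma hasSum_conv_abs {f g : ℕ → ℝ} (hf : Summable f) (hg : Summable g) :
    HasSum (conv (fun m => |f m|) (fun m => |g m|)) ((∑' k, |f k|) * ∑' k, |g k|) := by
  have hf' : Summable fun k => ‖|f k|‖ := by simpa using hf.abs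
  have hg' : Summable fun k => ‖|g k|‖ := by simpa using hg.abs
  rw [tsum_mul_tsum_eq_tsum_sum_antidiagonal_of_summable_norm hf' hg']
  exact (summable_sum_mul_antidiagonal_of_summable_norm' hf' hf.abs hg' hg.abs).hasSum

lemma summable_abs_conv {f g : ℕ → ℝ} (hf : Summable f) (hg : Summable g) :
    Summable fun k => |conv f g k| :=
  (hasSum_conv_abs hf hg).summable.of_nonneg_of_le (fun _ => abs_nonneg _) (abs_conv_le f g)

lemma tsum_abs_conv_le {f g : ℕ → ℝ} (hf : Summable f) (hg : Summable g) :
    ∑' k, |conv f g k| ≤ (∑' k, |f k|) * ∑' k, |g k| :=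
  hasSum_le (abs_conv_le f g) (summable_abs_conv hf hg).hasSum (hasSum_conv_abs hf hg)

lemma tsum_abs_conv_sub_conv_le {a b c d : ℕ → ℝ} (ha : Summable a) (hb : Summable b)
    (hc : Summable c) (hd : Summable d) :
    ∑' k, |conv a b k - conv c d k| ≤
      (∑' k, |a k - c k|) * (∑' k, |b k|) + (∑' k, |c k|) * ∑' k, |b k - d k| := by
  have hac : Summable (a - c) := ha.sub hc
  have hbd : Summable (b - d) := hb.sub hd
  have h₁ := summable_abs_conv hac hb
  have h₂ := summable_abs_conv hc hbd
  simp only [conv_sub_conv]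
  calc ∑' k, |conv (a - c) b k + conv c (b - d) k|
      ≤ ∑' k, (|conv (a - c) b k| + |conv c (b - d) k|) :=
        Summable.tsum_le_tsum (fun _ => abs_add_le _ _)
          ((h₁.add h₂).of_nonneg_of_le (fun _ => abs_nonneg _) (fun _ => abs_add_le _ _))
          (h₁.add h₂)
    _ = ∑' k, |conv (a - c) b k| + ∑' k, |conv c (b - d) k| := h₁.tsum_add h₂
    _ ≤ _ := add_le_add (tsum_abs_conv_le hac hb) (tsum_abs_conv_le hc hbd)

def IsProbMass (a : ℕ → ℝ) : Prop := (∀ k, 0 ≤ a k) ∧ HasSum a 1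

lemma IsProbMass.tsum_abs {a : ℕ → ℝ} (ha : IsProbMass a) : ∑' k, |a k| = 1 := by
  simpa only [abs_of_nonneg (ha.1 _)] using ha.2.tsum_eq

lemma tsum_abs_conv_sub_conv_le_of_isProbMass {a b c d : ℕ → ℝ} (ha : Summable a)
    (hb : IsProbMass b) (hc : IsProbMass c) (hd : Summable d) :
    ∑' k, |conv a b k - conv c d k| ≤ ∑' k, |a k - c k| + ∑' k, |b k - d k| := by
  simpa only [hb.tsum_abs, hc.tsum_abs, mul_one, one_mul] using
    tsum_abs_conv_sub_conv_le ha hb.2.summable hc.2.summable hd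

noncomputable def poissonMass (r : ℝ) (k : ℕ) : ℝ := Real.exp (-r) * r ^ k / k !

lemma hasSum_poissonMass (r : ℝ) : HasSum (poissonMass r) 1 := by
  have h := (NormedSpace.expSeries_div_hasSum_exp r).mul_left (Real.exp (-r))
  rw [← Real.exp_eq_exp_ℝ, ← Real.exp_add, neg_add_cancel, Real.exp_zero] at h
  simp only [← mul_div_assoc] at h
  exact h

lemma isProbMass_poissonMass {r : ℝ} (hr : 0 ≤ r) : IsProbMass (poissonMass r) :=
  ⟨fun _ => by unfold poissonMass; positivity, hasSum_poissonMass r⟩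

lemma conv_poissonMass (x y : ℝ) : conv (poissonMass x) (poissonMass y) = poissonMass (x + y) := by
  ext k
  simp only [conv, poissonMass, (Commute.all x y).add_pow', neg_add, Real.exp_add, mul_sum,
    sum_div]
  refine sum_congr rfl fun ij hij => ?_
  obtain rfl := mem_antidiagonal.mp hij
  have := Nat.add_choose_mul_factorial_mul_factorial ij.1 ij.2
  rw [← Nat.choose_symm_add] at this
  field_simp
  rw [nsmul_eq_mul, ← this]
  push_cast
  ring

noncomputable def bernoulliMass (p : ℝ) : ℕ → ℝ
  | 0 => 1 - p
  | 1 => p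
  | _ + 2 => 0

lemma hasSum_bernoulliMass (p : ℝ) : HasSum (bernoulliMass p) 1 := by
  have hfin : ∀ k ∉ range 2, bernoulliMass p k = 0 := fun k hk => by
    obtain ⟨j, rfl⟩ : ∃ j, k = j + 2 := ⟨k - 2, by simp at hk; omega⟩
    rfl
  simpa [sum_range_succ, bernoulliMass] using hasSum_sum_of_ne_finset_zero hfin

lemma tsum_abs_bernoulliMass_sub_poissonMass_le {p : ℝ} (hp : 0 ≤ p) :
    ∑' k, |bernoulliMass p k - poissonMass p k| ≤ 2 * p ^ 2 := by
  have hpoi := (hasSum_poissonMass p).summable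
  have hdiff := ((hasSum_bernoulliMass p).summable.sub hpoi).abs
  have htail : ∀ k, |bernoulliMass p (k + 2) - poissonMass p (k + 2)| = poissonMass p (k + 2) :=
    fun k => by
      rw [bernoulliMass, zero_sub, abs_neg, abs_of_nonneg ((isProbMass_poissonMass hp).1 _)]
  have hsplit := hdiff.sum_add_tsum_nat_add 2
  have hpoi_split := hpoi.sum_add_tsum_nat_add 2
  simp only [htail] at hsplit
  rw [(hasSum_poissonMass p).tsum_eq] at hpoi_split
  rw [← hsplit]
  have he1 : 1 - p ≤ Real.exp (-p) := by linarith [Real.add_one_le_exp (-p)]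
  have he2 : Real.exp (-p) ≤ 1 := Real.exp_le_one_iff.mpr (by linarith)
  simp only [sum_range_succ, sum_range_zero, zero_add, bernoulliMass, poissonMass, pow_zero,
    pow_one, mul_one, Nat.factorial_zero, Nat.factorial_one, Nat.cast_one, div_one] at hpoi_split ⊢
  rw [abs_of_nonpos (by linarith), abs_of_nonneg (by nlinarith)]
  nlinarith

variable {Ω : Type*} [MeasurableSpace Ω] {P : Measure Ω}

lemma isProbMass_measureReal_eq [IsProbabilityMeasure P] {Y : Ω → ℕ} (hY : Measurable Y) :
    IsProbMass fun k => P.real {ω | Y ω = k} := by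
  refine ⟨fun _ => measureReal_nonneg, ?_⟩
  have hm : ∀ k, MeasurableSet {ω | Y ω = k} := fun k => hY (measurableSet_singleton k)
  have hcover : ⋃ k, {ω | Y ω = k} = Set.univ := Set.iUnion_eq_univ_iff.mpr fun ω => ⟨Y ω, rfl⟩
  have hfib : ∑' k, P {ω | Y ω = k} = 1 := by
    rw [← measure_iUnion
      (fun k l hkl => Set.disjoint_left.mpr fun ω hk hl => hkl (hk.symm.trans hl)) hm,
      hcover, measure_univ]
  have := ENNReal.hasSum_toReal (hfib ▸ ENNReal.one_ne_top)
  rwa [← ENNReal.tsum_toReal_eq (fun _ => measure_ne_top _ _), hfib, ENNReal.toReal_one] at this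

lemma _root_.ProbabilityTheory.IndepFun.measureReal_add_eq_conv [IsFiniteMeasure P]
    {Y Z : Ω → ℕ} (hY : Measurable Y) (hZ : Measurable Z) (hYZ : IndepFun Y Z P) (k : ℕ) :
    P.real {ω | Y ω + Z ω = k} =
      conv (fun m => P.real {ω | Y ω = m}) (fun m => P.real {ω | Z ω = m}) k := by
  have hset : {ω | Y ω + Z ω = k} = (fun ω => (Y ω, Z ω)) ⁻¹' ↑(antidiagonal k) := by
    ext ω; simp
  rw [hset, ← sum_measureReal_preimage_singleton _
    fun x _ => (hY.prodMk hZ) (measurableSet_singleton x)]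
  refine sum_congr rfl fun x _ => ?_
  have hprod : (fun ω => (Y ω, Z ω)) ⁻¹' {x} = Y ⁻¹' {x.1} ∩ Z ⁻¹' {x.2} := by
    ext ω; simp [Prod.ext_iff]
  rw [hprod, measureReal_def, hYZ.measure_inter_preimage_eq_mul _ _ (measurableSet_singleton _)
    (measurableSet_singleton _), ENNReal.toReal_mul]
  rfl

lemma measureReal_eq_bernoulliMass [IsProbabilityMeasure P] {Y : Ω → ℕ} (hY : Measurable Y)
    (hBer : ∀ ω, Y ω = 0 ∨ Y ω = 1) (k : ℕ) :
    P.real {ω | Y ω = k} = bernoulliMass (P.real {ω | Y ω = 1}) k := by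
  match k with
  | 0 =>
    have hcompl : {ω | Y ω = 0} = {ω | Y ω = 1}ᶜ := by
      ext ω; rcases hBer ω with h | h <;> simp [h]
    rw [hcompl, probReal_compl_eq_one_sub (s := {ω | Y ω = 1}) (hY (measurableSet_singleton 1))]
    rfl
  | 1 => rfl
  | k + 2 =>
    have hempty : {ω | Y ω = k + 2} = ∅ := by
      ext ω; rcases hBer ω with h | h <;> simp [h]
    rw [hempty, measureReal_empty]
    rfl

theorem tsum_abs_measureReal_sum_sub_poissonMass_le [IsProbabilityMeasure P] {ι : Type*}
    {X : ι → Ω → ℕ} (hmeas : ∀ i, Measurable (X i)) (hind : iIndepFun X P) {p : ι → ℝ}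
    (hlaw : ∀ i k, P.real {ω | X i ω = k} = bernoulliMass (p i) k) (s : Finset ι) :
    ∑' k, |P.real {ω | ∑ i ∈ s, X i ω = k} - poissonMass (∑ i ∈ s, p i) k| ≤
      2 * ∑ i ∈ s, p i ^ 2 := by
  have hber : ∀ i, IsProbMass (bernoulliMass (p i)) := fun i =>
    funext (hlaw i) ▸ isProbMass_measureReal_eq (hmeas i)
  have hp : ∀ i, 0 ≤ p i := fun i => (hber i).1 1
  induction s using Finset.cons_induction with
  | empty =>
    have h₀ : ∀ k, P.real {ω : Ω | 0 = k} = poissonMass 0 k := fun k => by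
      rcases k with _ | k <;> simp [poissonMass]
    simp only [sum_empty, h₀, sub_self, abs_zero, tsum_zero, mul_zero, le_refl]
  | cons j s hj ih =>
    have hS : Measurable fun ω => ∑ i ∈ s, X i ω := Finset.measurable_sum s fun i _ => hmeas i
    have hSj : IndepFun (fun ω => ∑ i ∈ s, X i ω) (X j) P := by
      simpa only [Finset.sum_fn] using hind.indepFun_finsetSum_of_notMem hmeas hj
    have hlawS : ∀ k, P.real {ω | ∑ i ∈ cons j s hj, X i ω = k} =
        conv (fun m => P.real {ω | ∑ i ∈ s, X i ω = m}) (bernoulliMass (p j)) k := by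
      intro k
      simp only [sum_cons, add_comm (X j _), hSj.measureReal_add_eq_conv hS (hmeas j), hlaw]
    have hμS : 0 ≤ ∑ i ∈ s, p i := sum_nonneg fun i _ => hp i
    calc ∑' k, |P.real {ω | ∑ i ∈ cons j s hj, X i ω = k} - poissonMass (∑ i ∈ cons j s hj, p i) k|
        = ∑' k, |conv (fun m => P.real {ω | ∑ i ∈ s, X i ω = m}) (bernoulliMass (p j)) k -
            conv (poissonMass (∑ i ∈ s, p i)) (poissonMass (p j)) k| := by
          refine tsum_congr fun k => ?_
          rw [hlawS, sum_cons, add_comm (p j), conv_poissonMass]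
      _ ≤ ∑' k, |P.real {ω | ∑ i ∈ s, X i ω = k} - poissonMass (∑ i ∈ s, p i) k| +
            ∑' k, |bernoulliMass (p j) k - poissonMass (p j) k| :=
          tsum_abs_conv_sub_conv_le_of_isProbMass (isProbMass_measureReal_eq hS).2.summable
            (hber j) (isProbMass_poissonMass hμS) (hasSum_poissonMass _).summable
      _ ≤ 2 * ∑ i ∈ s, p i ^ 2 + 2 * p j ^ 2 :=
          add_le_add ih (tsum_abs_bernoulliMass_sub_poissonMass_le (hp j))
      _ = 2 * ∑ i ∈ cons j s hj, p i ^ 2 := by rw [sum_cons]; ring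

end LeCam

open LeCam in
/-- **Le Cam's inequality.**  Let `X₁,…,Xₙ` be independent Bernoulli random variables with
`P(Xᵢ = 1) = pᵢ`, let `X = ∑ Xᵢ` and `μ = ∑ pᵢ`.  Then
`∑_{k≥0} |P(X = k) − e^{−μ}μᵏ/k!| ≤ 2 ∑ pᵢ²`. -/
theorem stmt7 {Ω : Type*} [MeasureSpace Ω] [IsProbabilityMeasure (ℙ : Measure Ω)]
    (n : ℕ) (X : Fin n → Ω → ℕ)
    (hmeas : ∀ i, Measurable (X i))
    (hBer : ∀ i ω, X i ω = 0 ∨ X i ω = 1)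
    (hind : iIndepFun X ℙ)
    (p : Fin n → ℝ) (hp : ∀ i, p i = (ℙ {ω | X i ω = 1}).toReal)
    (μ : ℝ) (hμ : μ = ∑ i, p i) :
    ∑' k : ℕ, |(ℙ {ω | (∑ i, X i ω) = k}).toReal -
        Real.exp (-μ) * μ ^ k / (Nat.factorial k)| ≤ 2 * ∑ i, (p i) ^ 2 := by
  have hlaw : ∀ i k, (ℙ : Measure Ω).real {ω | X i ω = k} = bernoulliMass (p i) k := fun i k => by
    rw [hp i]
    exact measureReal_eq_bernoulliMass (hmeas i) (hBer i) k
  have := tsum_abs_measureReal_sum_sub_poissonMass_le hmeas hind hlaw univ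
  rwa [← hμ] at this
end

section
/- Fix m, z > 0 and for each integer k ≥ 2 define s̃_k := (m/(k(k−1)))·e^{−m/z}·Σ_{ℓ=k−1}^∞ (1/ℓ!)·(m/z)^ℓ. Then Σ_{k≥2} k·s̃_k = m·Ein(m/z), where Ein(w) = ∫₀^w (1−e^{−t})/t dt. -/
/-- `s̃_k = (m/(k(k−1)))·e^{−m/z}·∑_{ℓ=k−1}^∞ (m/z)^ℓ/ℓ!` (with the sum reindexed from `0`). -/
noncomputable def stilde (m z : ℝ) (k : ℕ) : ℝ :=
  m / ((k : ℝ) * ((k : ℝ) - 1)) * Real.exp (-(m / z)) *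
    ∑' ℓ : ℕ, (m / z) ^ (ℓ + (k - 1)) / (Nat.factorial (ℓ + (k - 1)))

open Real Finset Nat

lemma hasSum_exp_tail (w : ℝ) (n : ℕ) :
    HasSum (fun ℓ => w ^ (ℓ + n) / (ℓ + n)!) (exp w - ∑ i ∈ range n, w ^ i / i !) := by
  refine (hasSum_nat_add_iff' (f := fun i => w ^ i / i !) n).mpr ?_
  rw [exp_eq_exp_ℝ]
  exact NormedSpace.expSeries_div_hasSum_exp w

lemma hasSum_pow_div_factorial_succ {t : ℝ} (ht : t ≠ 0) :
    HasSum (fun n => t ^ n / (n + 1)!) ((exp t - 1) / t) := by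
  have h := (hasSum_exp_tail t 1).div_const t
  simp only [range_one, sum_singleton, pow_zero, factorial_zero, cast_one, div_one] at h
  refine h.congr_fun fun n => ?_
  rw [pow_succ]
  field_simp

lemma hasDerivAt_neg_exp_neg_mul_sum_range (n : ℕ) (t : ℝ) :
    HasDerivAt (fun s => -(exp (-s) * ∑ i ∈ range (n + 1), s ^ i / i !))
      (exp (-t) * (t ^ n / n !)) t := by
  induction n with
  | zero => simpa using (hasDerivAt_neg t).exp.fun_neg
  | succ n ih =>
    have hpow : HasDerivAt (fun s => exp (-s) * (s ^ (n + 1) / (n + 1)!))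
        (-exp (-t) * (t ^ (n + 1) / (n + 1)!) + exp (-t) * (t ^ n / n !)) t := by
      refine ((hasDerivAt_neg t).exp.mul
        ((hasDerivAt_pow (n + 1) t).div_const (n + 1)!)).congr_deriv ?_
      rw [Nat.factorial_succ]
      push_cast
      field_simp
    have hsplit : (fun s => -(exp (-s) * ∑ i ∈ range (n + 1 + 1), s ^ i / i !)) = fun s =>
        -(exp (-s) * ∑ i ∈ range (n + 1), s ^ i / i !) - exp (-s) * (s ^ (n + 1) / (n + 1)!) := by
      funext s
      rw [sum_range_succ]
      ring
    rw [hsplit]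
    exact (ih.fun_sub hpow).congr_deriv (by ring)

lemma integral_exp_neg_mul_pow_div_factorial (w : ℝ) (n : ℕ) :
    ∫ t in 0..w, exp (-t) * (t ^ n / n !) =
      exp (-w) * ∑' ℓ, w ^ (ℓ + (n + 1)) / (ℓ + (n + 1))! := by
  rw [intervalIntegral.integral_eq_sub_of_hasDerivAt
    (fun t _ => hasDerivAt_neg_exp_neg_mul_sum_range n t)
    ((by fun_prop : Continuous _).intervalIntegrable _ _),
    (hasSum_exp_tail w (n + 1)).tsum_eq, mul_sub, ← exp_add]
  simp [sum_range_succ', sub_eq_add_neg, add_comm]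

lemma hasSum_integral_exp_neg_mul_pow_div_factorial_succ (w : ℝ) :
    HasSum (fun n => ∫ t in 0..w, exp (-t) * (t ^ n / (n + 1)!)) (Ein w) := by
  refine intervalIntegral.hasSum_integral_of_dominated_convergence
    (fun n _ => exp |w| * (|w| ^ n / n !)) (fun n => by fun_prop) (fun n => ?_)
    (.of_forall fun _ _ => (summable_pow_div_factorial _).mul_left _) (by simp) ?_
  · filter_upwards with t ht
    have htw : |t| ≤ |w| := by
      simpa using Set.abs_sub_left_of_mem_uIcc (Set.uIoc_subset_uIcc ht)
    rw [norm_mul, norm_div, norm_pow, Real.norm_eq_abs, Real.norm_eq_abs, abs_exp,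
      Real.norm_natCast]
    gcongr
    · exact (neg_le_abs t).trans htw
    · exact n.le_succ
  · filter_upwards [MeasureTheory.volume.ae_ne 0] with t ht _
    rw [show (1 - exp (-t)) / t = exp (-t) * ((exp t - 1) / t) by
      rw [mul_div_assoc', mul_sub, ← exp_add]; simp]
    exact (hasSum_pow_div_factorial_succ ht).mul_left (exp (-t))

theorem stmt12_general (m z : ℝ) :
    ∑' j : ℕ, ((j : ℝ) + 2) * stilde m z (j + 2) = m * Ein (m / z) := by
  have hterm (j : ℕ) : ((j : ℝ) + 2) * stilde m z (j + 2) =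
      m * ∫ t in 0..m / z, exp (-t) * (t ^ j / (j + 1)!) := by
    have hfac (t : ℝ) : exp (-t) * (t ^ j / (j + 1)!) = exp (-t) * (t ^ j / j !) / (j + 1) := by
      rw [Nat.factorial_succ]; push_cast; field_simp
    simp_rw [hfac, intervalIntegral.integral_div, integral_exp_neg_mul_pow_div_factorial, stilde]
    rw [show j + 2 - 1 = j + 1 from rfl, show ((j + 2 : ℕ) : ℝ) - 1 = j + 1 by push_cast; ring]
    push_cast
    field_simp
  simp_rw [hterm]
  exact ((hasSum_integral_exp_neg_mul_pow_div_factorial_succ _).mul_left m).tsum_eq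

/-- `∑_{k≥2} k·s̃_k = m·Ein(m/z)` (the sum over `k ≥ 2` is reindexed via `k = j + 2`). -/
theorem stmt12 (m z : ℝ) (hm : 0 < m) (hz : 0 < z) :
    ∑' j : ℕ, ((j : ℝ) + 2) * stilde m z (j + 2) = m * Ein (m / z) :=
  stmt12_general m z
end
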